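/- arXiv:1610.09721 — 2 statements merged into one kernel-verified Lean document; each statement's English description precedes it below -/
import Mathlib

section
/- Let k ≥ 2 and let X be a word with content {x_1,...,x_n} in which each variable x_i occurs at least k−1 times. Then the monoid L_{2k}^1 = ⟨a,b,1 | aa=a, bb=b, (ab)^k = 0⟩ satisfies the identity x_1 x_2 ··· x_n · X · x_n x_{n−1} ··· x_1 ≈ x_1 x_2 ··· x_n · reverse(X) · x_n x_{n−1} ··· x_1. -/
/-!
Write elements of `L_ℓ^1` as values of words over `{a, b}` (`false`, `true`); the zero is the
value of the alternating word `abab⋯` of length `ℓ`. As `a` and `b` are idempotent, a word has the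
value of its destuttering, an alternating word, and that value is `0` as soon as it has more than
`ℓ` letters.

If some `θ xᵢ` is a word containing both letters, then `xᵢ` occurs at least `k + 1` times on
each side, so each side has an alternating subsequence of length `2k + 2`; the destuttering is a
longest alternating subsequence, so both sides are `0`. Otherwise every `θ xᵢ` is a power of one
letter, the right-hand word is the mirror image of the left-hand one, and it begins and ends
with the same letter. An alternating word over `{a, b}` is determined by its first letter and its
length, and reversal preserves both, so the two sides have the same destuttering.
-/

/-- The alternating word abab⋯ of length ℓ (a = 0, b = 1 in `Fin 3`). -/
def altWord (ℓ : ℕ) : FreeMonoid (Fin 3) :=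
  FreeMonoid.ofList ((List.range ℓ).map (fun i => if i % 2 = 0 then (0 : Fin 3) else 1))

/-- Defining relations of the Lee monoid L_ℓ^1: generators a = 0, b = 1, zero = 2,
relations aa = a, bb = b, abab⋯ (length ℓ) = 0, and 0 is absorbing. -/
def leeRel (ℓ : ℕ) : FreeMonoid (Fin 3) → FreeMonoid (Fin 3) → Prop := fun u v =>
  (u = .of 0 * .of 0 ∧ v = .of 0) ∨
  (u = .of 1 * .of 1 ∧ v = .of 1) ∨
  (u = altWord ℓ ∧ v = .of 2) ∨
  (u = .of 2 * .of 0 ∧ v = .of 2) ∨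
  (u = .of 0 * .of 2 ∧ v = .of 2) ∨
  (u = .of 2 * .of 1 ∧ v = .of 2) ∨
  (u = .of 1 * .of 2 ∧ v = .of 2) ∨
  (u = .of 2 * .of 2 ∧ v = .of 2)

/-- The Lee monoid L_ℓ^1 (with adjoined identity 1, the empty word).
For ℓ = 2 * k this is L_{2k}^1 = ⟨a,b,1 ∣ aa=a, bb=b, (ab)^k = 0⟩. -/
def Lee (ℓ : ℕ) : Type := (conGen (leeRel ℓ)).Quotient

instance (ℓ : ℕ) : Monoid (Lee ℓ) := Con.monoid _

/-- The word x₁x₂⋯xₙ. -/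
def ascFin (n : ℕ) : List (Fin n) := List.ofFn id

open List

namespace List

section Destutter

variable {α : Type*}

theorem head?_destutter' (R : α → α → Prop) [DecidableRel R] (a : α) (l : List α) :
    (l.destutter' R a).head? = some a := by
  induction l generalizing a with
  | nil => rfl
  | cons b l ih => rw [destutter'_cons]; split_ifs <;> simp [ih]

theorem head?_destutter (R : α → α → Prop) [DecidableRel R] (l : List α) :
    (l.destutter R).head? = l.head? := by
  cases l with
  | nil => rfl
  | cons a l => rw [destutter_cons', head?_destutter', head?_cons]

variable [DecidableEq α]

theorem prod_map_destutter'_ne {M : Type*} [Monoid M] {g : α → M}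
    (hg : ∀ a, IsIdempotentElem (g a)) (a : α) (l : List α) :
    ((l.destutter' (· ≠ ·) a).map g).prod = g a * (l.map g).prod := by
  induction l generalizing a with
  | nil => simp [destutter']
  | cons b l ih =>
    rw [destutter'_cons]
    split_ifs with hab
    · simp [ih]
    · obtain rfl := not_not.mp hab
      rw [ih, map_cons, prod_cons, ← mul_assoc, (hg a).eq]

theorem prod_map_destutter_ne {M : Type*} [Monoid M] {g : α → M}
    (hg : ∀ a, IsIdempotentElem (g a)) (l : List α) :
    ((l.destutter (· ≠ ·)).map g).prod = (l.map g).prod := by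
  cases l with
  | nil => rfl
  | cons a l => rw [destutter_cons', prod_map_destutter'_ne hg, map_cons, prod_cons]

theorem length_destutter_ne_reverse (l : List α) :
    (l.reverse.destutter (· ≠ ·)).length = (l.destutter (· ≠ ·)).length := by
  have key (l : List α) :
      (l.reverse.destutter (· ≠ ·)).length ≤ (l.destutter (· ≠ ·)).length := by
    have hchain : (l.reverse.destutter (· ≠ ·)).reverse.IsChain (· ≠ ·) :=
      isChain_reverse.mpr ((isChain_destutter _ _).imp fun _ _ h => h.symm)
    simpa using hchain.length_le_length_destutter_ne (destutter_sublist _ _).reverse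
  exact (key l).antisymm (by simpa using key l.reverse)

end Destutter

theorem Sublist.flatten_replicate {α : Type*} {l₁ l₂ : List α} (h : l₁ <+ l₂) (n : ℕ) :
    (replicate n l₁).flatten <+ (replicate n l₂).flatten := by
  induction n with
  | zero => simp
  | succ n ih => simpa [replicate_succ] using h.append ih

theorem head?_eq_getLast?_append_append_reverse {α : Type*} {S T : List α}
    (h : S = [] → T = []) : (S ++ T ++ S.reverse).head? = (S ++ T ++ S.reverse).getLast? := by
  cases S with
  | nil => simp [h rfl]
  | cons a S => rw [getLast?_append, getLast?_reverse]; simp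

theorem eq_of_isChain_ne_bool {l₁ l₂ : List Bool} (h₁ : l₁.IsChain (· ≠ ·))
    (h₂ : l₂.IsChain (· ≠ ·)) (hhead : l₁.head? = l₂.head?) (hlen : l₁.length = l₂.length) :
    l₁ = l₂ := by
  induction l₁ generalizing l₂ with
  | nil => exact (length_eq_zero_iff.mp hlen.symm).symm
  | cons a t ih =>
    obtain _ | ⟨b, t'⟩ := l₂
    · simp at hlen
    obtain rfl : a = b := by simpa using hhead
    refine congrArg _ (ih h₁.tail h₂.tail ?_ (by simpa using hlen))
    obtain _ | ⟨c, t⟩ := t <;> obtain _ | ⟨c', t'⟩ := t'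
    · rfl
    · simp at hlen
    · simp at hlen
    · have hc : c = !a := Bool.eq_not_of_ne (isChain_cons_cons.mp h₁).1.symm
      have hc' : c' = !a := Bool.eq_not_of_ne (isChain_cons_cons.mp h₂).1.symm
      rw [head?_cons, head?_cons, hc, hc']

theorem destutter_ne_reverse_of_head?_eq_getLast? {l : List Bool}
    (h : l.head? = l.getLast?) : l.reverse.destutter (· ≠ ·) = l.destutter (· ≠ ·) :=
  eq_of_isChain_ne_bool (isChain_destutter _ _) (isChain_destutter _ _)
    (by rw [head?_destutter, head?_destutter, head?_reverse, h])
    (length_destutter_ne_reverse l)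

theorem reverse_eq_self_of_forall_not_pair_sublist {l : List Bool}
    (h : ∀ c, ¬[c, !c] <+ l) : l.reverse = l := by
  obtain _ | ⟨a, t⟩ := l
  · rfl
  suffices hrep : a :: t = replicate (t.length + 1) a by rw [hrep, reverse_replicate]
  refine eq_replicate_iff.mpr ⟨rfl, fun b hb => ?_⟩
  by_contra hba
  have hbt : b ∈ t := (mem_cons.mp hb).resolve_left hba
  obtain rfl : b = !a := by cases a <;> cases b <;> simp_all
  exact h a ((singleton_sublist.mpr hbt).cons_cons a)

theorem isChain_ne_flatten_replicate_pair (c : Bool) (n : ℕ) :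
    ((replicate n [c, !c]).flatten).IsChain (· ≠ ·) := by
  induction n with
  | zero => simp
  | succ n ih =>
    have hhead : ∀ y ∈ ((replicate n [c, !c]).flatten).head?, y = c := by
      cases n <;> simp [replicate_succ]
    rw [replicate_succ, flatten_cons, isChain_append]
    refine ⟨by simp, ih, fun x hx y hy => ?_⟩
    simp only [getLast?_cons_cons, getLast?_singleton, Option.mem_some_iff] at hx
    rw [← hx, hhead y hy]
    simp

end List

namespace Lee

variable (ℓ : ℕ)

def mk : FreeMonoid (Fin 3) →* Lee ℓ := (conGen (leeRel ℓ)).mk'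

def letter (c : Bool) : Fin 3 := cond c 1 0

def gen (c : Bool) : Lee ℓ := mk ℓ (.of (letter c))

def zero : Lee ℓ := mk ℓ (.of 2)

def eval (w : List Bool) : Lee ℓ := (w.map (gen ℓ)).prod

def altBool : List Bool := (range ℓ).map fun i => decide (i % 2 = 1)

variable {ℓ}

theorem mk_eq_mk_of_leeRel {u v : FreeMonoid (Fin 3)} (h : leeRel ℓ u v) : mk ℓ u = mk ℓ v :=
  (Con.eq _).mpr (ConGen.Rel.of u v h)

theorem gen_mul_self (c : Bool) : gen ℓ c * gen ℓ c = gen ℓ c := by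
  rw [gen, ← map_mul]
  cases c <;> exact mk_eq_mk_of_leeRel (by simp [leeRel, letter])

theorem zero_mul_mk_of (x : Fin 3) : zero ℓ * mk ℓ (.of x) = zero ℓ := by
  rw [zero, ← map_mul]
  fin_cases x <;> exact mk_eq_mk_of_leeRel (by simp [leeRel])

theorem mk_of_mul_zero (x : Fin 3) : mk ℓ (.of x) * zero ℓ = zero ℓ := by
  rw [zero, ← map_mul]
  fin_cases x <;> exact mk_eq_mk_of_leeRel (by simp [leeRel])

theorem zero_mul (m : Lee ℓ) : zero ℓ * m = zero ℓ := by
  induction m using Con.induction_on with | H u => ?_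
  change zero ℓ * mk ℓ u = zero ℓ
  induction u using FreeMonoid.inductionOn' with
  | one => rw [map_one, mul_one]
  | of_mul x u ih => rw [map_mul, ← mul_assoc, zero_mul_mk_of, ih]

theorem mul_zero (m : Lee ℓ) : m * zero ℓ = zero ℓ := by
  induction m using Con.induction_on with | H u => ?_
  change mk ℓ u * zero ℓ = zero ℓ
  induction u using FreeMonoid.inductionOn' with
  | one => rw [map_one, one_mul]
  | of_mul x u ih => rw [map_mul, mul_assoc, ih, mk_of_mul_zero]

@[simp]
theorem eval_append (u v : List Bool) : eval ℓ (u ++ v) = eval ℓ u * eval ℓ v := by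
  simp [eval]

theorem eval_eq_mk (w : List Bool) : eval ℓ w = mk ℓ (.ofList (w.map letter)) := by
  induction w with
  | nil => rfl
  | cons c w ih => rw [← singleton_append, eval_append, ih]; simp [eval, gen]

theorem eval_altBool : eval ℓ (altBool ℓ) = zero ℓ := by
  rw [eval_eq_mk, altBool, map_map]
  refine mk_eq_mk_of_leeRel
    (Or.inr (Or.inr (Or.inl ⟨congrArg _ (map_congr_left fun i _ => ?_), rfl⟩)))
  rcases Nat.mod_two_eq_zero_or_one i with h | h <;> simp [letter, h]

theorem exists_eval_eq (m : Lee ℓ) : ∃ w, eval ℓ w = m := by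
  induction m using Con.induction_on with | H u => ?_
  change ∃ w, eval ℓ w = mk ℓ u
  induction u using FreeMonoid.inductionOn' with
  | one => exact ⟨[], rfl⟩
  | of_mul x u ih =>
    obtain ⟨w, hw⟩ := ih
    have hx : ∃ v, eval ℓ v = mk ℓ (.of x) := by
      fin_cases x
      exacts [⟨[false], by simp [eval, gen, letter]⟩, ⟨[true], by simp [eval, gen, letter]⟩,
        ⟨altBool ℓ, eval_altBool⟩]
    obtain ⟨v, hv⟩ := hx
    exact ⟨v ++ w, by rw [eval_append, hv, hw, map_mul]⟩

theorem isChain_ne_altBool : (altBool ℓ).IsChain (· ≠ ·) := by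
  rw [altBool, isChain_map, isChain_range]
  intro m _
  simp only [ne_eq, decide_eq_decide]
  omega

theorem altBool_isPrefix_of_isChain_ne {l : List Bool} (hl : l.IsChain (· ≠ ·))
    (hhead : l.head? = some false) (hlen : ℓ ≤ l.length) : altBool ℓ <+: l := by
  rcases Nat.eq_zero_or_pos ℓ with rfl | hℓ
  · exact nil_prefix
  have htake : take ℓ l = altBool ℓ := by
    refine eq_of_isChain_ne_bool (hl.take ℓ) isChain_ne_altBool ?_ (by simp [altBool, hlen])
    obtain ⟨ℓ, rfl⟩ := Nat.exists_eq_add_of_lt hℓ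
    simp [head?_take, hhead, altBool, range_succ_eq_map]
  exact htake ▸ take_prefix ℓ l

theorem altBool_isInfix_of_isChain_ne {l : List Bool} (hl : l.IsChain (· ≠ ·))
    (hlen : ℓ + 1 ≤ l.length) : altBool ℓ <:+: l := by
  obtain _ | ⟨c, t⟩ := l
  · simp at hlen
  cases c
  · exact (altBool_isPrefix_of_isChain_ne hl rfl (by omega)).isInfix
  · obtain _ | ⟨d, t⟩ := t
    · obtain rfl : ℓ = 0 := by simpa using hlen
      exact nil_infix
    have hd : d = false := by simpa using (isChain_cons_cons.mp hl).1.symm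
    subst hd
    have hlen' : ℓ ≤ (false :: t).length := by simp only [length_cons] at hlen ⊢; omega
    exact (altBool_isPrefix_of_isChain_ne hl.tail rfl hlen').isInfix.trans (suffix_cons _ _).isInfix

theorem eval_destutter (w : List Bool) : eval ℓ (w.destutter (· ≠ ·)) = eval ℓ w :=
  prod_map_destutter_ne gen_mul_self w

theorem eval_eq_zero_of_isChain_ne_sublist {l w : List Bool} (hl : l.IsChain (· ≠ ·))
    (hlw : l <+ w) (hlen : ℓ + 1 ≤ l.length) : eval ℓ w = zero ℓ := by
  have hd : ℓ + 1 ≤ (w.destutter (· ≠ ·)).length :=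
    hlen.trans (hl.length_le_length_destutter_ne hlw)
  obtain ⟨s, t, hst⟩ := altBool_isInfix_of_isChain_ne (isChain_destutter _ _) hd
  rw [← eval_destutter, ← hst, eval_append, eval_append, eval_altBool, mul_zero, zero_mul]

theorem eval_reverse_of_head?_eq_getLast? {w : List Bool} (h : w.head? = w.getLast?) :
    eval ℓ w.reverse = eval ℓ w := by
  rw [← eval_destutter, destutter_ne_reverse_of_head?_eq_getLast? h, eval_destutter]

theorem prod_map_eq_eval_flatMap {ι : Type*} {θ : ι → Lee ℓ} {w : ι → List Bool}
    (hw : ∀ i, eval ℓ (w i) = θ i) (L : List ι) : (L.map θ).prod = eval ℓ (L.flatMap w) := by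
  induction L with
  | nil => rfl
  | cons i L ih => rw [map_cons, prod_cons, flatMap_cons, eval_append, hw, ih]

theorem eval_flatMap_eq_zero {ι : Type*} [DecidableEq ι] {k : ℕ} {w : ι → List Bool} {i : ι}
    {c : Bool} (hc : [c, !c] <+ w i) {L : List ι} (hL : k + 1 ≤ L.count i) :
    eval (2 * k) (L.flatMap w) = zero (2 * k) := by
  refine eval_eq_zero_of_isChain_ne_sublist (isChain_ne_flatten_replicate_pair c (k + 1)) ?_
    (by simp only [length_flatten, map_replicate, sum_replicate, smul_eq_mul, length_cons,
      length_nil]; omega)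
  calc (replicate (k + 1) [c, !c]).flatten
      <+ (replicate (k + 1) (w i)).flatten := hc.flatten_replicate (k + 1)
    _ = (replicate (k + 1) i).flatMap w := by simp [flatMap, map_replicate]
    _ <+ L.flatMap w := (replicate_sublist_iff.mpr hL).flatMap w

theorem eval_flatMap_reverse_middle {ι : Type*} {w : ι → List Bool}
    (hw : ∀ i, (w i).reverse = w i) {A Y : List ι} (hY : ∀ i ∈ Y, i ∈ A) :
    eval ℓ ((A ++ Y.reverse ++ A.reverse).flatMap w) =
      eval ℓ ((A ++ Y ++ A.reverse).flatMap w) := by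
  have hrev (M : List ι) : M.reverse.flatMap w = (M.flatMap w).reverse := by
    simp [reverse_flatMap, Function.comp_def, hw]
  rw [show A ++ Y.reverse ++ A.reverse = (A ++ Y ++ A.reverse).reverse by simp, hrev]
  refine eval_reverse_of_head?_eq_getLast? ?_
  rw [flatMap_append, flatMap_append, hrev]
  refine head?_eq_getLast?_append_append_reverse fun hA => flatMap_eq_nil_iff.mpr fun i hi => ?_
  exact flatMap_eq_nil_iff.mp hA i (hY i hi)

end Lee

theorem mem_ascFin {n : ℕ} (i : Fin n) : i ∈ ascFin n := mem_ofFn.mpr ⟨i, rfl⟩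

theorem count_ascFin {n : ℕ} (i : Fin n) : (ascFin n).count i = 1 :=
  count_eq_one_of_mem (nodup_ofFn.mpr fun _ _ h => h) (mem_ascFin i)

theorem stmt3_general (k : ℕ) (n : ℕ) (X : List (Fin n))
    (hocc : ∀ i : Fin n, k - 1 ≤ X.count i)
    (θ : Fin n → Lee (2 * k)) :
    (((ascFin n ++ X ++ (ascFin n).reverse).map θ).prod
      = ((ascFin n ++ X.reverse ++ (ascFin n).reverse).map θ).prod) := by
  choose w hw using fun i => Lee.exists_eval_eq (θ i)
  rw [Lee.prod_map_eq_eval_flatMap hw, Lee.prod_map_eq_eval_flatMap hw]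
  by_cases hpair : ∃ i c, [c, !c] <+ w i
  · obtain ⟨i, c, hc⟩ := hpair
    have hcount (Y : List (Fin n)) (hY : X.count i = Y.count i) :
        k + 1 ≤ (ascFin n ++ Y ++ (ascFin n).reverse).count i := by
      have hX := hocc i
      simp only [count_append, count_reverse, count_ascFin]
      omega
    rw [Lee.eval_flatMap_eq_zero hc (hcount X rfl),
      Lee.eval_flatMap_eq_zero hc (hcount X.reverse count_reverse.symm)]
  · simp only [not_exists] at hpair
    exact (Lee.eval_flatMap_reverse_middle
      (fun i => reverse_eq_self_of_forall_not_pair_sublist (hpair i))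
      fun i _ => mem_ascFin i).symm

/-- Let k ≥ 2 and X a word with content {x₁,…,xₙ} in which every variable occurs at
least k − 1 times.  Then L_{2k}^1 satisfies
x₁x₂⋯xₙ · X · xₙ⋯x₂x₁ ≈ x₁x₂⋯xₙ · reverse(X) · xₙ⋯x₂x₁. -/
theorem stmt3 (k : ℕ) (hk : 2 ≤ k) (n : ℕ) (X : List (Fin n))
    (hocc : ∀ i : Fin n, k - 1 ≤ X.count i)
    (θ : Fin n → Lee (2 * k)) :
    (((ascFin n ++ X ++ (ascFin n).reverse).map θ).prod
      = ((ascFin n ++ X.reverse ++ (ascFin n).reverse).map θ).prod) :=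
  stmt3_general k n X hocc θ
end

section
/- Let τ be a congruence on the free semigroup A^+ such that for every letter x, x τ u implies u is a power of x. Let W ⊆ A^+ be nonempty, a union of τ-classes, and closed under taking factors. Then for any semigroup S, the variety generated by S contains S_τ(W) if and only if every word in W is a τ-term for S, where a word u is a τ-term for S if S ⊨ u ≈ v implies u τ v. -/
/-- The value of a nonempty word under a substitution of semigroup elements for
variables (`none` for the empty word). -/
def evalS {S : Type*} [Semigroup S] (θ : ℕ → S) : List ℕ → Option S
  | [] => none
  | x :: xs => some (xs.foldl (fun s y => s * θ y) (θ x))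

/-- The semigroup S satisfies the identity u ≈ v. -/
def SatS (S : Type*) [Semigroup S] (u v : List ℕ) : Prop :=
  ∀ θ : ℕ → S, evalS θ u = evalS θ v

/-- Every identity of S holds in the Rees quotient S_τ(W) of A⁺/τ over the ideal
generated by the complement of W.  (Elements of S_τ(W) are exactly the images of
nonempty words: the value of a word w under a substitution θ into S_τ(W) is the
τ-class of the substituted word wθ if wθ ∈ W, and zero otherwise; so an identity
u ≈ v holds in S_τ(W) iff for every substitution θ by nonempty words either both
uθ, vθ lie in W and are τ-related, or both lie outside W.  By Birkhoff's theorem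
this condition is equivalent to the variety generated by S containing S_τ(W).) -/
def VarContainsSTau (τ : List ℕ → List ℕ → Prop) (W : Set (List ℕ))
    (S : Type*) [Semigroup S] : Prop :=
  ∀ u v : List ℕ, u ≠ [] → v ≠ [] → SatS S u v →
    ∀ θ : ℕ → List ℕ, (∀ x, θ x ≠ []) →
      ((u.flatMap θ ∈ W ∧ v.flatMap θ ∈ W ∧ τ (u.flatMap θ) (v.flatMap θ)) ∨
       (u.flatMap θ ∉ W ∧ v.flatMap θ ∉ W))

def omul {S : Type*} [Semigroup S] : Option S → Option S → Option S
  | none, b => b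
  | some a, none => some a
  | some a, some b => some (a * b)

lemma foldl_mul {S : Type*} [Semigroup S] (θ : ℕ → S) :
    ∀ (ys : List ℕ) (A B : S),
      ys.foldl (fun s y => s * θ y) (A * B) = A * ys.foldl (fun s y => s * θ y) B
  | [], _, _ => rfl
  | z :: ys, A, B => by
    simp only [List.foldl_cons, mul_assoc]
    exact foldl_mul θ ys A (B * θ z)

lemma evalS_append {S : Type*} [Semigroup S] (θ : ℕ → S) (a b : List ℕ) :
    evalS θ (a ++ b) = omul (evalS θ a) (evalS θ b) := by
  cases a with
  | nil => simp [evalS, omul]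
  | cons x xs =>
    cases b with
    | nil => simp [evalS, omul]
    | cons y ys =>
      show some _ = omul (some _) (some _)
      simp only [omul, Option.some.injEq]
      rw [List.append_eq, List.foldl_append, List.foldl_cons, foldl_mul]

lemma evalS_ne {S : Type*} [Semigroup S] (θ : ℕ → S) (w : List ℕ) (hw : w ≠ []) :
    ∃ a, evalS θ w = some a := by
  cases w with
  | nil => exact absurd rfl hw
  | cons x xs => exact ⟨_, rfl⟩

lemma evalS_flatMap {S : Type*} [Semigroup S] (φ : ℕ → S) (θ : ℕ → List ℕ)
    (θ' : ℕ → S) (hθ' : ∀ x, evalS φ (θ x) = some (θ' x)) :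
    ∀ u : List ℕ, evalS φ (u.flatMap θ) = evalS θ' u
  | [] => rfl
  | x :: xs => by
    have h1 : (x :: xs).flatMap θ = θ x ++ xs.flatMap θ := by simp [List.flatMap]
    have h2 : (x :: xs) = [x] ++ xs := rfl
    rw [h1, evalS_append, hθ', evalS_flatMap φ θ θ' hθ' xs, h2, evalS_append]
    rfl

lemma flatMap_ne {u : List ℕ} (θ : ℕ → List ℕ) (hθ : ∀ x, θ x ≠ []) (hu : u ≠ []) :
    u.flatMap θ ≠ [] := by
  cases u with
  | nil => exact absurd rfl hu
  | cons x xs =>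
    have h1 : (x :: xs).flatMap θ = θ x ++ xs.flatMap θ := by simp [List.flatMap]
    rw [h1]
    simp [hθ x]

lemma satS_flatMap {S : Type*} [Semigroup S] {u v : List ℕ} (h : SatS S u v)
    (θ : ℕ → List ℕ) (hθ : ∀ x, θ x ≠ []) : SatS S (u.flatMap θ) (v.flatMap θ) := by
  intro φ
  have : ∀ x, ∃ a, evalS φ (θ x) = some a := fun x => evalS_ne φ (θ x) (hθ x)
  choose θ' hθ' using this
  rw [evalS_flatMap φ θ θ' hθ' u, evalS_flatMap φ θ θ' hθ' v]
  exact h θ'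

/-- Let τ be a congruence on the free semigroup A⁺ (an equivalence relation on
nonempty words compatible with concatenation) such that any word τ-related to a
letter x is a power of x.  Let W be a nonempty set of nonempty words which is a
union of τ-classes and closed under taking factors.  Then for every semigroup S the
variety generated by S contains S_τ(W) if and only if every word in W is a τ-term
for S, i.e. S ⊨ u ≈ v implies u τ v whenever u ∈ W. -/
theorem stmt19 (τ : List ℕ → List ℕ → Prop)
    (hrefl : ∀ u : List ℕ, u ≠ [] → τ u u)
    (hsymm : ∀ u v, τ u v → τ v u)
    (htrans : ∀ u v w, τ u v → τ v w → τ u w)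
    (hcong : ∀ u v u' v', τ u v → τ u' v' → τ (u ++ u') (v ++ v'))
    (hneτ : ∀ u v, τ u v → u ≠ [] ∧ v ≠ [])
    (hletter : ∀ (x : ℕ) (u : List ℕ), τ [x] u → ∃ m, 0 < m ∧ u = List.replicate m x)
    (W : Set (List ℕ)) (hWne : W.Nonempty) (hWnil : [] ∉ W)
    (hWτ : ∀ u ∈ W, ∀ v, τ u v → v ∈ W)
    (hWfac : ∀ u ∈ W, ∀ p m q : List ℕ, u = p ++ m ++ q → m ≠ [] → m ∈ W)
    (S : Type*) [Semigroup S] :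
    VarContainsSTau τ W S ↔ (∀ u ∈ W, ∀ v : List ℕ, v ≠ [] → SatS S u v → τ u v) := by
  constructor
  · intro hvar u hu v hv hsat
    have hu' : u ≠ [] := fun h => hWnil (h ▸ hu)
    have := hvar u v hu' hv hsat (fun x => [x]) (fun x => by simp)
    simp only [List.flatMap_singleton'] at this
    rcases this with ⟨_, _, h⟩ | ⟨h, _⟩
    · exact h
    · exact absurd hu h
  · intro hterm u v hu hv hsat θ hθ
    have hU : u.flatMap θ ≠ [] := flatMap_ne θ hθ hu
    have hV : v.flatMap θ ≠ [] := flatMap_ne θ hθ hv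
    have hUV : SatS S (u.flatMap θ) (v.flatMap θ) := satS_flatMap hsat θ hθ
    by_cases hW : u.flatMap θ ∈ W
    · have hτ : τ (u.flatMap θ) (v.flatMap θ) := hterm _ hW _ hV hUV
      exact Or.inl ⟨hW, hWτ _ hW _ hτ, hτ⟩
    · refine Or.inr ⟨hW, fun hVW => hW ?_⟩
      have hτ : τ (v.flatMap θ) (u.flatMap θ) :=
        hterm _ hVW _ hU (fun φ => (hUV φ).symm)
      exact hWτ _ hVW _ hτ
end
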